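/- For integers m ≥ 0, n ∈ ℤ, and γ = (a b; c d) ∈ SL(2,ℂ): ∂_z^m((cz+d)^{-n} f((az+b)/(cz+d))) = ∑_{r=0}^{m} (m!/r!) · C(m+n−1, m−r) · (−c)^{m−r} · (cz+d)^{-(n+m+r)} · f^{(r)}((az+b)/(cz+d)), where C(·,·) is the (generalized) binomial coefficient. -/

import Mathlib

/-! Induction on `m`. Since `det γ = 1`, the derivative of `γz` is `(cz+d)^(-2)`, so one
differentiation sends `(cz+d)^(-j) G(γz)` to `-jc (cz+d)^(-j-1) G(γz) + (cz+d)^(-j-2) G'(γz)`.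
Hence the coefficients `A m r` of `(cz+d)^(-(n+m+r)) f^(r)(γz)` obey the Pascal-type recurrence
`A (m+1) r = -c (n+m+r) A m r + A m (r-1)`, and the closed form satisfies it by the identity
`(k+r+1) C(y+1, k+1) = (y+r+1) C(y, k) + r C(y, k+1)`. -/

/-- The homographic action of `γ = (a b; c d) ∈ SL(2,ℂ)`: `z ↦ (az+b)/(cz+d)`. -/
noncomputable def mact (γ : Matrix.SpecialLinearGroup (Fin 2) ℂ) (z : ℂ) : ℂ :=
  (γ.1 0 0 * z + γ.1 0 1) / (γ.1 1 0 * z + γ.1 1 1)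

/-- The automorphy factor `cz + d` for `γ = (a b; c d) ∈ SL(2,ℂ)`. -/
noncomputable def mden (γ : Matrix.SpecialLinearGroup (Fin 2) ℂ) (z : ℂ) : ℂ :=
  γ.1 1 0 * z + γ.1 1 1

/-- The generalized binomial coefficient `C(x, r) = x(x-1)⋯(x-r+1)/r!` for `x : ℂ`. -/
noncomputable def gchoose (x : ℂ) (r : ℕ) : ℂ :=
  (∏ i ∈ Finset.range r, (x - i)) / (r.factorial : ℂ)

lemma gchoose_zero (x : ℂ) : gchoose x 0 = 1 := by simp [gchoose]

lemma gchoose_succ (y : ℂ) (k : ℕ) : gchoose y (k + 1) = gchoose y k * (y - k) / (k + 1) := by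
  simp only [gchoose, Finset.prod_range_succ, Nat.factorial_succ]
  push_cast
  field_simp

lemma gchoose_add_one_succ (y : ℂ) (k : ℕ) :
    gchoose (y + 1) (k + 1) = (y + 1) * gchoose y k / (k + 1) := by
  have hprod :
      ∏ i ∈ Finset.range (k + 1), (y + 1 - i) = (y + 1) * ∏ i ∈ Finset.range k, (y - i) := by
    rw [Finset.prod_range_succ']
    push_cast
    simp only [add_sub_add_right_eq_sub, sub_zero, mul_comm]
  simp only [gchoose, hprod, Nat.factorial_succ]
  push_cast
  field_simp

lemma add_mul_gchoose_add_one_succ (y : ℂ) (k r : ℕ) :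
    (k + r + 1) * gchoose (y + 1) (k + 1) = (y + r + 1) * gchoose y k + r * gchoose y (k + 1) := by
  rw [gchoose_add_one_succ, gchoose_succ]
  field_simp
  ring

lemma sum_range_succ_succ_eq_of_pascal {M : Type*} [AddCommMonoid M] (m : ℕ) (p q s : ℕ → M)
    (h_zero : s 0 = p 0) (h_last : s (m + 1) = q m) (h_mid : ∀ r < m, s (r + 1) = p (r + 1) + q r) :
    ∑ r ∈ Finset.range (m + 2), s r = ∑ r ∈ Finset.range (m + 1), (p r + q r) := by
  rw [Finset.sum_range_succ, Finset.sum_range_succ', Finset.sum_add_distrib,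
    Finset.sum_range_succ' p, Finset.sum_range_succ q,
    Finset.sum_congr rfl fun r hr => h_mid r (Finset.mem_range.1 hr), Finset.sum_add_distrib,
    h_zero, h_last]
  abel

-- Only meaningful for `r ≤ m`, since `m - r` truncates.
noncomputable def slashCoeff (n : ℤ) (c : ℂ) (m r : ℕ) : ℂ :=
  ((m.factorial : ℂ) / (r.factorial : ℂ)) * gchoose ((m : ℂ) + (n : ℂ) - 1) (m - r) *
    (-c) ^ (m - r)

section slashCoeff

variable (n : ℤ) (c : ℂ)

lemma slashCoeff_self (m : ℕ) : slashCoeff n c m m = 1 := by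
  simp [slashCoeff, gchoose_zero, Nat.factorial_ne_zero]

lemma slashCoeff_succ_zero (m : ℕ) :
    slashCoeff n c (m + 1) 0 = slashCoeff n c m 0 * (-c * (n + m)) := by
  have key := add_mul_gchoose_add_one_succ ((m : ℂ) + n - 1) m 0
  simp only [slashCoeff, Nat.sub_zero, Nat.factorial_succ, pow_succ]
  push_cast at key ⊢
  rw [show (m : ℂ) + 1 + n - 1 = m + n - 1 + 1 by ring]
  linear_combination (m.factorial : ℂ) * (-c) ^ m * (-c) * key

lemma slashCoeff_succ_succ {m r : ℕ} (hr : r < m) :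
    slashCoeff n c (m + 1) (r + 1) =
      slashCoeff n c m (r + 1) * (-c * (n + m + (r + 1))) + slashCoeff n c m r := by
  obtain ⟨k, hk⟩ : ∃ k, m - (r + 1) = k := ⟨_, rfl⟩
  have hm : (m : ℂ) + 1 = k + (r + 1 : ℕ) + 1 := by norm_cast; omega
  have key := add_mul_gchoose_add_one_succ ((m : ℂ) + n - 1) k (r + 1)
  rw [← hm] at key
  simp only [slashCoeff, hk, show m - r = k + 1 by omega, show m + 1 - (r + 1) = k + 1 by omega,
    Nat.factorial_succ]
  push_cast at key ⊢
  rw [show (m : ℂ) + 1 + n - 1 = m + n - 1 + 1 by ring]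
  field_simp
  linear_combination (m.factorial : ℂ) / r.factorial * (-c) ^ (k + 1) * key

lemma sum_slashCoeff_mul_deriv_terms (m : ℕ) (u : ℂ) (F : ℕ → ℂ) :
    ∑ r ∈ Finset.range (m + 1), slashCoeff n c m r *
        (-((n + m + r : ℤ) : ℂ) * c * u ^ (-(n + m + r + 1)) * F r +
          u ^ (-(n + m + r + 2)) * F (r + 1)) =
      ∑ r ∈ Finset.range (m + 1 + 1), slashCoeff n c (m + 1) r *
        u ^ (-(n + ((m + 1 : ℕ) : ℤ) + (r : ℤ))) * F r := by
  refine Eq.trans ?_ (sum_range_succ_succ_eq_of_pascal m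
    (fun r => slashCoeff n c m r * (-c * (n + m + r)) *
      (u ^ (-(n + ((m + 1 : ℕ) : ℤ) + r)) * F r))
    (fun r => slashCoeff n c m r *
      (u ^ (-(n + ((m + 1 : ℕ) : ℤ) + ((r + 1 : ℕ) : ℤ))) * F (r + 1)))
    _ ?first ?last ?middle).symm
  case first =>
    rw [slashCoeff_succ_zero]
    push_cast
    ring
  case last => simp only [slashCoeff_self, one_mul]
  case middle =>
    intro r hr
    rw [slashCoeff_succ_succ n c hr]
    push_cast
    ring
  refine Finset.sum_congr rfl fun r _ => ?_
  rw [show -(n + m + r + 1) = -(n + ((m + 1 : ℕ) : ℤ) + r) by push_cast; ring,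
    show -(n + m + r + 2) = -(n + ((m + 1 : ℕ) : ℤ) + ((r + 1 : ℕ) : ℤ)) by push_cast; ring]
  push_cast
  ring

end slashCoeff

section homography

variable (γ : Matrix.SpecialLinearGroup (Fin 2) ℂ)

lemma hasDerivAt_mden (z : ℂ) : HasDerivAt (mden γ) (γ.1 1 0) z :=
  (((hasDerivAt_id' z).const_mul (γ.1 1 0)).add_const (γ.1 1 1)).congr_deriv (mul_one _)

lemma hasDerivAt_mact {z : ℂ} (hz : mden γ z ≠ 0) :
    HasDerivAt (mact γ) (mden γ z ^ (-2 : ℤ)) z := by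
  have hdet : γ.1 0 0 * γ.1 1 1 - γ.1 0 1 * γ.1 1 0 = 1 := by
    rw [← Matrix.det_fin_two]
    exact γ.2
  have hnum : HasDerivAt (fun w => γ.1 0 0 * w + γ.1 0 1) (γ.1 0 0) z :=
    (((hasDerivAt_id' z).const_mul (γ.1 0 0)).add_const (γ.1 0 1)).congr_deriv (mul_one _)
  refine (hnum.div (hasDerivAt_mden γ z) hz).congr_deriv ?_
  have hwronskian : γ.1 0 0 * mden γ z - (γ.1 0 0 * z + γ.1 0 1) * γ.1 1 0 = 1 := by
    unfold mden
    linear_combination hdet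
  rw [hwronskian, one_div, zpow_neg, zpow_ofNat]

lemma hasDerivAt_mden_zpow_mul_comp_mact {G : ℂ → ℂ} {G' z : ℂ} (j : ℤ)
    (hG : HasDerivAt G G' (mact γ z)) (hz : mden γ z ≠ 0) :
    HasDerivAt (fun w => mden γ w ^ (-j) * G (mact γ w))
      (-(j : ℂ) * γ.1 1 0 * mden γ z ^ (-(j + 1)) * G (mact γ z)
        + mden γ z ^ (-(j + 2)) * G') z := by
  have hpow := (hasDerivAt_zpow (-j) _ (Or.inl hz)).comp z (hasDerivAt_mden γ z)
  refine (hpow.mul (hG.comp z (hasDerivAt_mact γ hz))).congr_deriv ?_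
  rw [show -(j + 2) = -j + -2 by ring, zpow_add₀ hz, show -j - 1 = -(j + 1) by ring]
  simp only [Function.comp_apply]
  push_cast
  ring

end homography

theorem iteratedDeriv_mden_zpow_mul_comp_mact (γ : Matrix.SpecialLinearGroup (Fin 2) ℂ)
    {f : ℂ → ℂ} (hf : Differentiable ℂ f) (n : ℤ) (m : ℕ) {z : ℂ} (hz : mden γ z ≠ 0) :
    iteratedDeriv m (fun w => mden γ w ^ (-n) * f (mact γ w)) z =
      ∑ r ∈ Finset.range (m + 1), slashCoeff n (γ.1 1 0) m r *
        mden γ z ^ (-(n + (m : ℤ) + (r : ℤ))) * iteratedDeriv r f (mact γ z) := by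
  induction m generalizing z with
  | zero => simp [slashCoeff_self]
  | succ m ih =>
    have hf_iter (r : ℕ) : HasDerivAt (iteratedDeriv r f) (iteratedDeriv (r + 1) f (mact γ z))
        (mact γ z) := by
      rw [iteratedDeriv_succ]
      exact ((hf.contDiff (n := ⊤)).differentiable_iteratedDeriv r
        (WithTop.coe_lt_top _) _).hasDerivAt
    have hlocal : iteratedDeriv m (fun w => mden γ w ^ (-n) * f (mact γ w)) =ᶠ[nhds z]
        fun w => ∑ r ∈ Finset.range (m + 1), slashCoeff n (γ.1 1 0) m r *
          (mden γ w ^ (-(n + (m : ℤ) + (r : ℤ))) * iteratedDeriv r f (mact γ w)) := by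
      have hcont : Continuous (mden γ) :=
        continuous_iff_continuousAt.2 fun w => (hasDerivAt_mden γ w).continuousAt
      filter_upwards [(isOpen_ne.preimage hcont).mem_nhds hz] with w hw
      simp only [ih hw, mul_assoc]
    have hderiv := HasDerivAt.fun_sum (u := Finset.range (m + 1)) fun r _ =>
      (hasDerivAt_mden_zpow_mul_comp_mact γ (n + m + r) (hf_iter r) hz).const_mul
        (slashCoeff n (γ.1 1 0) m r)
    rw [iteratedDeriv_succ, hlocal.deriv_eq, hderiv.deriv]
    exact sum_slashCoeff_mul_deriv_terms n (γ.1 1 0) m (mden γ z)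
      (fun r => iteratedDeriv r f (mact γ z))

/-- For integers `m ≥ 0`, `n ∈ ℤ` and `γ = (a b; c d) ∈ SL(2,ℂ)`:
`∂_z^m((cz+d)^{-n} f((az+b)/(cz+d)))
 = ∑_{r=0}^{m} (m!/r!) C(m+n−1, m−r) (−c)^{m−r} (cz+d)^{−(n+m+r)} f^{(r)}((az+b)/(cz+d))`. -/
theorem stmt12 (γ : Matrix.SpecialLinearGroup (Fin 2) ℂ) (f : ℂ → ℂ)
    (hf : Differentiable ℂ f) (m : ℕ) (n : ℤ) (z : ℂ) (hz : mden γ z ≠ 0) :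
    iteratedDeriv m (fun w => (mden γ w) ^ (-n) * f (mact γ w)) z =
      ∑ r ∈ Finset.range (m + 1),
        ((m.factorial : ℂ) / (r.factorial : ℂ)) *
          gchoose ((m : ℂ) + (n : ℂ) - 1) (m - r) *
          (-(γ.1 1 0)) ^ (m - r) *
          (mden γ z) ^ (-(n + (m : ℤ) + (r : ℤ))) *
          iteratedDeriv r f (mact γ z) :=
  iteratedDeriv_mden_zpow_mul_comp_mact γ hf n m hz
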